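/- arXiv:1506.08639 — 7 statements merged into one kernel-verified Lean document; each statement's English description precedes it below -/
import Mathlib

section
/- Let ψ(x,t) satisfy ψ_xx = (1/4 + λ q)ψ and let (y,τ) be reciprocal variables with ∂/∂x = r ∂/∂y, r = sqrt(q). Then φ = r^{1/2} ψ satisfies the Schrödinger equation φ_yy = λ φ + U φ with potential U = (1/2) r_yy/r - (1/4) r_y^2/r^2 + 1/(4 r^2). -/
/-- the Liouville-transformed eigenfunction φ = r^{1/2} ψ satisfies a
Schrödinger equation with potential U = r_yy/(2r) - r_y²/(4r²) + 1/(4r²). -/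
theorem stmt2 (lam : ℝ) (r ψ : ℝ → ℝ) (hr : ContDiff ℝ (⊤ : ℕ∞) r) (hψ : ContDiff ℝ (⊤ : ℕ∞) ψ)
    (hrpos : ∀ y, 0 < r y)
    (hLax : ∀ y, r y * deriv (fun z => r z * deriv ψ z) y = (1 / 4 + lam * (r y) ^ 2) * ψ y) :
    ∀ y, deriv (deriv (fun z => Real.sqrt (r z) * ψ z)) y =
      lam * (Real.sqrt (r y) * ψ y) +
      ((1 / 2) * deriv (deriv r) y / r y - (1 / 4) * (deriv r y) ^ 2 / (r y) ^ 2
        + 1 / (4 * (r y) ^ 2)) * (Real.sqrt (r y) * ψ y) := by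
  have hrd : Differentiable ℝ r := hr.differentiable (by simp)
  have hψd : Differentiable ℝ ψ := hψ.differentiable (by simp)
  have hr' : ContDiff ℝ (⊤ : ℕ∞) (deriv r) := (contDiff_infty_iff_deriv.mp (hr.of_le (by simp))).2
  have hψ' : ContDiff ℝ (⊤ : ℕ∞) (deriv ψ) := (contDiff_infty_iff_deriv.mp (hψ.of_le (by simp))).2
  have hr'd : Differentiable ℝ (deriv r) := hr'.differentiable (by norm_num)
  have hψ'd : Differentiable ℝ (deriv ψ) := hψ'.differentiable (by norm_num)
  have hs : ∀ z, HasDerivAt (fun w => Real.sqrt (r w)) (deriv r z / (2 * Real.sqrt (r z))) z :=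
    fun z => ((hrd z).hasDerivAt).sqrt (hrpos z).ne'
  intro y
  have h1 : (deriv (fun w => Real.sqrt (r w) * ψ w)) = fun z =>
      deriv r z / (2 * Real.sqrt (r z)) * ψ z + Real.sqrt (r z) * deriv ψ z := by
    funext z
    exact ((hs z).mul (hψd z).hasDerivAt).deriv
  rw [h1]
  have hsy : Real.sqrt (r y) ≠ 0 := (Real.sqrt_pos.mpr (hrpos y)).ne'
  have hsq : Real.sqrt (r y) ^ 2 = r y := Real.sq_sqrt (hrpos y).le
  have h3 : HasDerivAt (fun z => deriv r z / (2 * Real.sqrt (r z)))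
      ((deriv (deriv r) y * (2 * Real.sqrt (r y)) -
        deriv r y * (2 * (deriv r y / (2 * Real.sqrt (r y))))) / (2 * Real.sqrt (r y)) ^ 2) y :=
    ((hr'd y).hasDerivAt).div ((hs y).const_mul 2) (by positivity)
  have hA := (h3.mul (hψd y).hasDerivAt).add ((hs y).mul (hψ'd y).hasDerivAt)
  rw [(show HasDerivAt (fun z => deriv r z / (2 * Real.sqrt (r z)) * ψ z + Real.sqrt (r z) * deriv ψ z) _ y from hA).deriv]
  have hLax' : r y * (deriv r y * deriv ψ y + r y * deriv (deriv ψ) y)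
      = (1 / 4 + lam * (r y) ^ 2) * ψ y := by
    have h := hLax y
    rwa [(show HasDerivAt (fun z => r z * deriv ψ z) _ y from (hrd y).hasDerivAt.mul (hψ'd y).hasDerivAt).deriv] at h
  have hrny : r y ≠ 0 := (hrpos y).ne'
  set S := Real.sqrt (r y) with hS
  have hSne : S ≠ 0 := hsy
  rw [← hsq] at hLax' ⊢
  have hP'' : deriv (deriv ψ) y =
      ((1 / 4 + lam * S ^ 4) * ψ y - S ^ 2 * deriv r y * deriv ψ y) / S ^ 4 := by
    field_simp
    linear_combination 4 * hLax'
  rw [hP'']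
  field_simp
  ring
end

section
/- With f₁ = cosh ξ₁, ξ₁ = (p₁/2)(y + c₁τ), c₁ = 2k³/(k²p₁² - 1), the pair U = 1/(4k²) - (p₁²/2) sech²ξ₁ and r = k - (c₁ p₁²/2) sech²ξ₁ satisfies the negative-order KdV system U_τ = r_y and r_yyy - 4U r_y - 2 r U_y = 0. -/
noncomputable def pd1 (f : ℝ → ℝ → ℝ) : ℝ → ℝ → ℝ := fun x t => deriv (fun x0 => f x0 t) x
noncomputable def pd2 (f : ℝ → ℝ → ℝ) : ℝ → ℝ → ℝ := fun x t => deriv (fun t0 => f x t0) t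
def Smooth2 (f : ℝ → ℝ → ℝ) : Prop := ContDiff ℝ (⊤ : ℕ∞) (fun p : ℝ × ℝ => f p.1 p.2)

noncomputable def s0 (x : ℝ) : ℝ := (1 / Real.cosh x) ^ 2
noncomputable def s1 (x : ℝ) : ℝ := -2 * Real.sinh x / Real.cosh x ^ 3
noncomputable def s2 (x : ℝ) : ℝ := 4 / Real.cosh x ^ 2 - 6 / Real.cosh x ^ 4
noncomputable def s3 (x : ℝ) : ℝ :=
  -8 * Real.sinh x / Real.cosh x ^ 3 + 24 * Real.sinh x / Real.cosh x ^ 5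

lemma coshne (x : ℝ) : Real.cosh x ≠ 0 := (Real.cosh_pos x).ne'

lemma hs0 (x : ℝ) : HasDerivAt s0 (s1 x) x := by
  have h : HasDerivAt (fun x => (1 : ℝ) / Real.cosh x ^ 2)
      ((0 * Real.cosh x ^ 2 - 1 * (2 * Real.cosh x ^ 1 * Real.sinh x)) / (Real.cosh x ^ 2) ^ 2)
      x := (hasDerivAt_const x 1).div ((Real.hasDerivAt_cosh x).pow 2) (by positivity)
  have he : s0 = fun x => (1 : ℝ) / Real.cosh x ^ 2 := by
    funext x; simp [s0, div_pow]
  rw [he, show s1 x = (0 * Real.cosh x ^ 2 - 1 * (2 * Real.cosh x ^ 1 * Real.sinh x)) /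
      (Real.cosh x ^ 2) ^ 2 by unfold s1; field_simp [coshne x]; ring]
  exact h

lemma hs1 (x : ℝ) : HasDerivAt s1 (s2 x) x := by
  have h : HasDerivAt (fun x => -2 * Real.sinh x / Real.cosh x ^ 3)
      ((-2 * Real.cosh x * Real.cosh x ^ 3 -
        -2 * Real.sinh x * (3 * Real.cosh x ^ 2 * Real.sinh x)) / (Real.cosh x ^ 3) ^ 2) x :=
    (((Real.hasDerivAt_sinh x).const_mul (-2)).div ((Real.hasDerivAt_cosh x).pow 3)
      (by show Real.cosh x ^ 3 ≠ 0; exact pow_ne_zero 3 (coshne x))).congr_deriv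
      (by simp only [Pi.pow_apply]; ring)
  have he : s2 x = (-2 * Real.cosh x * Real.cosh x ^ 3 -
      -2 * Real.sinh x * (3 * Real.cosh x ^ 2 * Real.sinh x)) / (Real.cosh x ^ 3) ^ 2 := by
    have hs := Real.sinh_sq x
    unfold s2
    field_simp [coshne x]
    linear_combination (-6) * hs
  rw [show s1 = fun x => -2 * Real.sinh x / Real.cosh x ^ 3 from rfl, he]
  exact h

lemma hs2 (x : ℝ) : HasDerivAt s2 (s3 x) x := by
  have h1 : HasDerivAt (fun x => (4 : ℝ) / Real.cosh x ^ 2)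
      ((0 * Real.cosh x ^ 2 - 4 * (2 * Real.cosh x ^ 1 * Real.sinh x)) / (Real.cosh x ^ 2) ^ 2)
      x := (hasDerivAt_const x 4).div ((Real.hasDerivAt_cosh x).pow 2) (by positivity)
  have h2 : HasDerivAt (fun x => (6 : ℝ) / Real.cosh x ^ 4)
      ((0 * Real.cosh x ^ 4 - 6 * (4 * Real.cosh x ^ 3 * Real.sinh x)) / (Real.cosh x ^ 4) ^ 2)
      x := (hasDerivAt_const x 6).div ((Real.hasDerivAt_cosh x).pow 4) (by positivity)
  have h := h1.sub h2
  rw [show s2 = fun x => (4:ℝ)/Real.cosh x ^ 2 - 6 / Real.cosh x ^ 4 from rfl]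
  refine h.congr_deriv ?_
  unfold s3
  field_simp [coshne x]
  ring

lemma deriv_comp_lin {F F' : ℝ → ℝ} (hF : ∀ x, HasDerivAt F (F' x) x)
    (A B : ℝ) {L : ℝ → ℝ} {m : ℝ} (hL : ∀ t, HasDerivAt L m t) (t : ℝ) :
    deriv (fun t0 => A + B * F (L t0)) t = B * F' (L t) * m := by
  have h := (((hF (L t)).comp t (hL t)).const_mul B).const_add A
  simpa [mul_assoc] using h.deriv

/-- the one-soliton pair (U, r) satisfies the negative-order KdV system. -/
theorem stmt6 (k p1 c1 : ℝ) (hk : k ≠ 0) (hp : 0 < p1) (hkp : k ^ 2 * p1 ^ 2 ≠ 1)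
    (hc : c1 = 2 * k ^ 3 / (k ^ 2 * p1 ^ 2 - 1))
    (U r : ℝ → ℝ → ℝ)
    (hU : U = fun y τ =>
      1 / (4 * k ^ 2) - (p1 ^ 2 / 2) * (1 / Real.cosh ((p1 / 2) * (y + c1 * τ))) ^ 2)
    (hr : r = fun y τ =>
      k - (c1 * p1 ^ 2 / 2) * (1 / Real.cosh ((p1 / 2) * (y + c1 * τ))) ^ 2) :
    (∀ y τ, pd2 U y τ = pd1 r y τ) ∧
    (∀ y τ, pd1 (pd1 (pd1 r)) y τ - 4 * U y τ * pd1 r y τ - 2 * r y τ * pd1 U y τ = 0) := by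
  subst hU hr
  have hne : k ^ 2 * p1 ^ 2 - 1 ≠ 0 := fun h => hkp (by linarith [sub_eq_zero.mp h])
  have hc1 : c1 * (k ^ 2 * p1 ^ 2 - 1) = 2 * k ^ 3 := by
    rw [hc]; field_simp
  have hLy : ∀ τ t : ℝ, HasDerivAt (fun y0 => (p1 / 2) * (y0 + c1 * τ)) (p1 / 2) t := by
    intro τ t
    simpa using ((hasDerivAt_id t).add_const (c1 * τ)).const_mul (p1 / 2)
  have hLτ : ∀ y t : ℝ, HasDerivAt (fun τ0 => (p1 / 2) * (y + c1 * τ0)) ((p1 / 2) * c1) t := by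
    intro y t
    have := (((hasDerivAt_id t).const_mul c1).const_add y).const_mul (p1 / 2)
    simpa [mul_assoc] using this
  -- pd1 U
  have hU1 : ∀ y τ, pd1 (fun y τ =>
      1 / (4 * k ^ 2) - (p1 ^ 2 / 2) * (1 / Real.cosh ((p1 / 2) * (y + c1 * τ))) ^ 2) y τ =
      (-(p1 ^ 2 / 2)) * s1 ((p1 / 2) * (y + c1 * τ)) * (p1 / 2) := by
    intro y τ
    unfold pd1
    have e : (fun y0 => 1 / (4 * k ^ 2) -
        (p1 ^ 2 / 2) * (1 / Real.cosh ((p1 / 2) * (y0 + c1 * τ))) ^ 2) =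
        fun y0 => 1 / (4 * k ^ 2) + (-(p1 ^ 2 / 2)) * s0 ((p1 / 2) * (y0 + c1 * τ)) := by
      funext y0; simp [s0]; ring
    rw [e, deriv_comp_lin hs0 _ _ (hLy τ) y]
  -- pd2 U
  have hU2 : ∀ y τ, pd2 (fun y τ =>
      1 / (4 * k ^ 2) - (p1 ^ 2 / 2) * (1 / Real.cosh ((p1 / 2) * (y + c1 * τ))) ^ 2) y τ =
      (-(p1 ^ 2 / 2)) * s1 ((p1 / 2) * (y + c1 * τ)) * ((p1 / 2) * c1) := by
    intro y τ
    unfold pd2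
    have e : (fun τ0 => 1 / (4 * k ^ 2) -
        (p1 ^ 2 / 2) * (1 / Real.cosh ((p1 / 2) * (y + c1 * τ0))) ^ 2) =
        fun τ0 => 1 / (4 * k ^ 2) + (-(p1 ^ 2 / 2)) * s0 ((p1 / 2) * (y + c1 * τ0)) := by
      funext τ0; simp [s0]; ring
    rw [e, deriv_comp_lin hs0 _ _ (hLτ y) τ]
  -- pd1 r
  have hr1 : pd1 (fun y τ =>
      k - (c1 * p1 ^ 2 / 2) * (1 / Real.cosh ((p1 / 2) * (y + c1 * τ))) ^ 2) =
      fun y τ => (-(c1 * p1 ^ 2 / 2)) * s1 ((p1 / 2) * (y + c1 * τ)) * (p1 / 2) := by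
    funext y τ
    unfold pd1
    have e : (fun y0 => k -
        (c1 * p1 ^ 2 / 2) * (1 / Real.cosh ((p1 / 2) * (y0 + c1 * τ))) ^ 2) =
        fun y0 => k + (-(c1 * p1 ^ 2 / 2)) * s0 ((p1 / 2) * (y0 + c1 * τ)) := by
      funext y0; simp [s0]; ring
    rw [e, deriv_comp_lin hs0 _ _ (hLy τ) y]
  have hr2 : pd1 (pd1 (fun y τ =>
      k - (c1 * p1 ^ 2 / 2) * (1 / Real.cosh ((p1 / 2) * (y + c1 * τ))) ^ 2)) =
      fun y τ => (-(c1 * p1 ^ 2 / 2) * (p1 / 2)) * s2 ((p1 / 2) * (y + c1 * τ)) * (p1 / 2) := by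
    rw [hr1]
    funext y τ
    unfold pd1
    have e : (fun y0 => (-(c1 * p1 ^ 2 / 2)) * s1 ((p1 / 2) * (y0 + c1 * τ)) * (p1 / 2)) =
        fun y0 => 0 + (-(c1 * p1 ^ 2 / 2) * (p1 / 2)) * s1 ((p1 / 2) * (y0 + c1 * τ)) := by
      funext y0; ring
    rw [e, deriv_comp_lin hs1 _ _ (hLy τ) y]
  have hr3 : ∀ y τ, pd1 (pd1 (pd1 (fun y τ =>
      k - (c1 * p1 ^ 2 / 2) * (1 / Real.cosh ((p1 / 2) * (y + c1 * τ))) ^ 2))) y τ =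
      (-(c1 * p1 ^ 2 / 2) * (p1 / 2) ^ 2) * s3 ((p1 / 2) * (y + c1 * τ)) * (p1 / 2) := by
    intro y τ
    rw [hr2]
    unfold pd1
    have e : (fun y0 => (-(c1 * p1 ^ 2 / 2) * (p1 / 2)) * s2 ((p1 / 2) * (y0 + c1 * τ)) * (p1 / 2)) =
        fun y0 => 0 + (-(c1 * p1 ^ 2 / 2) * (p1 / 2) ^ 2) * s2 ((p1 / 2) * (y0 + c1 * τ)) := by
      funext y0; ring
    rw [e, deriv_comp_lin hs2 _ _ (hLy τ) y]
  constructor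
  · intro y τ
    rw [hU2 y τ, hr1]
    ring
  · intro y τ
    rw [hr3 y τ, hr1, hU1 y τ]
    have hcc := coshne ((p1 / 2) * (y + c1 * τ))
    unfold s1 s3
    beta_reduce
    set s := Real.sinh ((p1 / 2) * (y + c1 * τ)) with hs'
    set c := Real.cosh ((p1 / 2) * (y + c1 * τ)) with hc'
    rw [hc]
    field_simp
    ring
end

section
/- Under the reciprocal transformation with ∂_x = r ∂_y, ∂_t = ∂_τ - u r ∂_y, the Camassa-Holm equation (u - u_xx + k²)_t + 2(u - u_xx + k²) u_x + u(u - u_xx + k²)_x = 0 with r² = u - u_xx + k² becomes the associated CH system r_τ + r² u_y = 0, u = r² - r (log r)_{yτ} - k². -/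
lemma hasDerivAt_pd2 (f : ℝ → ℝ → ℝ) (hf : Smooth2 f) (y τ : ℝ) :
    HasDerivAt (fun t => f y t) (pd2 f y τ) τ := by
  have hG : Differentiable ℝ (fun p : ℝ × ℝ => f p.1 p.2) := hf.differentiable (by simp)
  have hd : DifferentiableAt ℝ (fun t => f y t) τ :=
    (hG (y, τ)).comp τ (((differentiableAt_const y).prodMk differentiableAt_id))
  simpa [pd2] using hd.hasDerivAt

lemma pd_symm (f : ℝ → ℝ → ℝ) (hf : Smooth2 f) (y τ : ℝ) :
    pd2 (pd1 f) y τ = pd1 (pd2 f) y τ := by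
  set G : ℝ × ℝ → ℝ := fun p => f p.1 p.2 with hGdef
  have hG : ContDiff ℝ (⊤ : ℕ∞) G := hf
  have hdG : Differentiable ℝ G := hG.differentiable (by simp)
  have hdG' : Differentiable ℝ (fderiv ℝ G) :=
    (hG.fderiv_right (m := 1) (by exact WithTop.coe_le_coe.mpr le_top)).differentiable (by simp)
  have key1 : ∀ a b, pd1 f a b = fderiv ℝ G (a, b) (1, 0) := by
    intro a b
    have h := (hdG (a, b)).hasFDerivAt.comp_hasDerivAt a
      ((hasDerivAt_id a).prodMk (hasDerivAt_const a b))
    simpa [pd1, hGdef, Function.comp_def] using h.deriv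
  have key2 : ∀ a b, pd2 f a b = fderiv ℝ G (a, b) (0, 1) := by
    intro a b
    have h := (hdG (a, b)).hasFDerivAt.comp_hasDerivAt b
      ((hasDerivAt_const b a).prodMk (hasDerivAt_id b))
    simpa [pd2, hGdef, Function.comp_def] using h.deriv
  have hleft : pd2 (pd1 f) y τ = fderiv ℝ (fderiv ℝ G) (y, τ) (0, 1) (1, 0) := by
    have h := (hdG' (y, τ)).hasFDerivAt.comp_hasDerivAt τ
      ((hasDerivAt_const τ y).prodMk (hasDerivAt_id τ))
    have h2 := h.clm_apply (hasDerivAt_const τ ((1 : ℝ), (0 : ℝ)))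
    have h3 : HasDerivAt (fun t => fderiv ℝ G (y, t) (1, 0))
        (fderiv ℝ (fderiv ℝ G) (y, τ) (0, 1) (1, 0)) τ := by simpa using h2
    have : (fun t => pd1 f y t) = fun t => fderiv ℝ G (y, t) (1, 0) :=
      funext fun t => key1 y t
    simp only [pd2, this]
    exact h3.deriv
  have hright : pd1 (pd2 f) y τ = fderiv ℝ (fderiv ℝ G) (y, τ) (1, 0) (0, 1) := by
    have h := (hdG' (y, τ)).hasFDerivAt.comp_hasDerivAt y
      ((hasDerivAt_id y).prodMk (hasDerivAt_const y τ))
    have h2 := h.clm_apply (hasDerivAt_const y ((0 : ℝ), (1 : ℝ)))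
    have h3 : HasDerivAt (fun a => fderiv ℝ G (a, τ) (0, 1))
        (fderiv ℝ (fderiv ℝ G) (y, τ) (1, 0) (0, 1)) y := by simpa using h2
    have : (fun a => pd2 f a τ) = fun a => fderiv ℝ G (a, τ) (0, 1) :=
      funext fun a => key2 a τ
    simp only [pd1, this]
    exact h3.deriv
  rw [hleft, hright]
  exact second_derivative_symmetric (fun p => (hdG p).hasFDerivAt)
    ((hdG' (y, τ)).hasFDerivAt) _ _

/-- in reciprocal variables the CH equation becomes the associated CH system. -/
theorem stmt7 (k : ℝ) (u r q : ℝ → ℝ → ℝ) (hu : Smooth2 u) (hr : Smooth2 r)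
    (hrpos : ∀ y τ, 0 < r y τ)
    (hq : q = fun y τ => (r y τ) ^ 2)
    (hconstraint : ∀ y τ,
      (r y τ) ^ 2 = u y τ - r y τ * pd1 (fun a b => r a b * pd1 u a b) y τ + k ^ 2)
    (hCH : ∀ y τ,
      (pd2 q y τ - u y τ * r y τ * pd1 q y τ) + 2 * q y τ * (r y τ * pd1 u y τ)
        + u y τ * (r y τ * pd1 q y τ) = 0) :
    (∀ y τ, pd2 r y τ + (r y τ) ^ 2 * pd1 u y τ = 0) ∧
    (∀ y τ, u y τ =
      (r y τ) ^ 2 - r y τ * pd2 (pd1 (fun a b => Real.log (r a b))) y τ - k ^ 2) := by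
  subst hq
  have part1 : ∀ y τ, pd2 r y τ + (r y τ) ^ 2 * pd1 u y τ = 0 := by
    intro y τ
    have h2 : pd2 (fun a b => r a b ^ 2) y τ = 2 * r y τ ^ 1 * pd2 r y τ := by
      have h := ((hasDerivAt_pd2 r hr y τ).pow 2).deriv
      simpa [pd2, Pi.pow_def] using h
    have hc := hCH y τ
    rw [h2] at hc
    have hX : (2 * r y τ) * (pd2 r y τ + (r y τ) ^ 2 * pd1 u y τ) = 0 := by ring_nf; ring_nf at hc; linarith
    rcases mul_eq_zero.mp hX with h | h
    · exfalso; linarith [hrpos y τ]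
    · exact h
  refine ⟨part1, fun y τ => ?_⟩
  -- smoothness of log ∘ r
  have hlog : Smooth2 (fun a b => Real.log (r a b)) := by
    apply contDiff_iff_contDiffAt.mpr
    intro p
    exact (Real.contDiffAt_log.mpr (hrpos p.1 p.2).ne').comp p hr.contDiffAt
  have hsym := pd_symm _ hlog y τ
  -- pd2 (log r) = - r * u_y
  have hp2log : ∀ a b, pd2 (fun a b => Real.log (r a b)) a b = -(r a b * pd1 u a b) := by
    intro a b
    have h := ((hasDerivAt_pd2 r hr a b).log (hrpos a b).ne').deriv
    have h1 : pd2 (fun a b => Real.log (r a b)) a b = pd2 r a b / r a b := by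
      simpa [pd2] using h
    have h2 := part1 a b
    rw [h1, div_eq_iff (hrpos a b).ne']
    nlinarith [h2]
  have hright : pd1 (pd2 (fun a b => Real.log (r a b))) y τ
      = - pd1 (fun a b => r a b * pd1 u a b) y τ := by
    have hfe : (fun a => pd2 (fun a b => Real.log (r a b)) a τ)
        = fun a => -(r a τ * pd1 u a τ) := funext fun a => hp2log a τ
    simp only [pd1, hfe]
    exact deriv.neg
  have hc := hconstraint y τ
  rw [hsym, hright]
  ring_nf
  ring_nf at hc
  linarith
end

section
/- If r = k - Γ with Γ = (c₁p₁²/2) sech²ξ₁, ξ₁ = (p₁/2)(y+c₁τ), c₁ = 2k³/(k²p₁²-1), then u defined by u = r² - r(log r)_{yτ} - k² equals u = k c₁ p₁² (c₁p₁² - 2k) sech²ξ₁ / (2k - c₁p₁² sech²ξ₁). -/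
lemma d1 (k A : ℝ) (x : ℝ) (h : k - A / Real.cosh x ^ 2 ≠ 0) :
    HasDerivAt (fun x => Real.log (k - A / Real.cosh x ^ 2))
      ((2 * A * Real.sinh x / Real.cosh x ^ 3) / (k - A / Real.cosh x ^ 2)) x := by
  have hc : Real.cosh x ≠ 0 := (Real.cosh_pos x).ne'
  have h1 : HasDerivAt (fun x => Real.cosh x ^ 2)
      (2 * Real.cosh x ^ 1 * Real.sinh x) x := (Real.hasDerivAt_cosh x).pow 2
  have h2 := ((hasDerivAt_const x A).div h1 (pow_ne_zero 2 hc))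
  have h3 := ((hasDerivAt_const x k).sub h2).log h
  have hden : k * Real.cosh x ^ 2 - A ≠ 0 := by
    intro h0
    apply h
    rw [show k - A / Real.cosh x ^ 2 = (k * Real.cosh x ^ 2 - A) / Real.cosh x ^ 2 by
      field_simp, h0, zero_div]
  convert h3 using 1
  · rfl
  simp only [Pi.sub_apply, Pi.div_apply]
  rw [show k - A / Real.cosh x ^ 2 = (k * Real.cosh x ^ 2 - A) / Real.cosh x ^ 2 by field_simp]
  field_simp
  ring

lemma d2 (k A : ℝ) (x : ℝ) (h : k - A / Real.cosh x ^ 2 ≠ 0) :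
    HasDerivAt (fun x => (2 * A * Real.sinh x / Real.cosh x ^ 3) / (k - A / Real.cosh x ^ 2))
      ((2 * A * (3 - 2 * Real.cosh x ^ 2) * (k * Real.cosh x ^ 2 - A)
          - 4 * A ^ 2 * (Real.cosh x ^ 2 - 1)) /
        (Real.cosh x ^ 2 * (k * Real.cosh x ^ 2 - A) ^ 2)) x := by
  have hc : Real.cosh x ≠ 0 := (Real.cosh_pos x).ne'
  have hden : k * Real.cosh x ^ 2 - A ≠ 0 := by
    intro h0
    apply h
    rw [show k - A / Real.cosh x ^ 2 = (k * Real.cosh x ^ 2 - A) / Real.cosh x ^ 2 by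
      field_simp, h0, zero_div]
  have hN : HasDerivAt (fun x => 2 * A * Real.sinh x / Real.cosh x ^ 3)
      ((2 * A * Real.cosh x * Real.cosh x ^ 3 -
        2 * A * Real.sinh x * (3 * Real.cosh x ^ 2 * Real.sinh x)) / (Real.cosh x ^ 3) ^ 2) x :=
    ((Real.hasDerivAt_sinh x).const_mul (2 * A)).div ((Real.hasDerivAt_cosh x).pow 3)
      (pow_ne_zero 3 hc)
  have h1' : HasDerivAt (fun x => Real.cosh x ^ 2)
      (2 * Real.cosh x ^ 1 * Real.sinh x) x := (Real.hasDerivAt_cosh x).pow 2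
  have hR : HasDerivAt (fun x => k - A / Real.cosh x ^ 2)
      (0 - (0 * Real.cosh x ^ 2 - A * (2 * Real.cosh x ^ 1 * Real.sinh x)) / (Real.cosh x ^ 2) ^ 2) x :=
    (hasDerivAt_const x k).sub ((hasDerivAt_const x A).div h1' (pow_ne_zero 2 hc))
  have h4 := hN.div hR h
  convert h4 using 1
  · rfl
  · rfl
  · rfl
  have hs : Real.sinh x ^ 2 = Real.cosh x ^ 2 - 1 := Real.sinh_sq x
  have hr2 : k - A / Real.cosh x ^ 2 = (k * Real.cosh x ^ 2 - A) / Real.cosh x ^ 2 := by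
    field_simp
  rw [hr2]
  field_simp
  ring_nf
  rw [hs]
  ring

/-- the one-soliton formula for the CH potential u in reciprocal variables. -/
theorem stmt8 (k p1 c1 : ℝ) (hk : k ≠ 0) (hp : 0 < p1) (hkp : k ^ 2 * p1 ^ 2 ≠ 1)
    (hc : c1 = 2 * k ^ 3 / (k ^ 2 * p1 ^ 2 - 1))
    (Γ r u : ℝ → ℝ → ℝ)
    (hΓ : Γ = fun y τ => (c1 * p1 ^ 2 / 2) * (1 / Real.cosh ((p1 / 2) * (y + c1 * τ))) ^ 2)
    (hr : r = fun y τ => k - Γ y τ)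
    (hrne : ∀ y τ, r y τ ≠ 0)
    (hu : u = fun y τ =>
      (r y τ) ^ 2 - r y τ * pd2 (pd1 (fun a b => Real.log (r a b))) y τ - k ^ 2) :
    ∀ y τ, u y τ =
      k * c1 * p1 ^ 2 * (c1 * p1 ^ 2 - 2 * k) *
          (1 / Real.cosh ((p1 / 2) * (y + c1 * τ))) ^ 2 /
        (2 * k - c1 * p1 ^ 2 * (1 / Real.cosh ((p1 / 2) * (y + c1 * τ))) ^ 2) := by
  intro y τ
  set A : ℝ := c1 * p1 ^ 2 / 2 with hA
  have hre : ∀ a b, r a b = k - A / Real.cosh ((p1 / 2) * (a + c1 * b)) ^ 2 := by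
    intro a b
    simp only [hr, hΓ]
    rw [div_pow, one_pow, mul_one_div]
  have hrne' : ∀ a b, k - A / Real.cosh ((p1 / 2) * (a + c1 * b)) ^ 2 ≠ 0 := by
    intro a b; rw [← hre]; exact hrne a b
  -- Step A: first partial derivative
  have stepA : ∀ a b, pd1 (fun a b => Real.log (r a b)) a b =
      ((2 * A * Real.sinh ((p1 / 2) * (a + c1 * b)) / Real.cosh ((p1 / 2) * (a + c1 * b)) ^ 3) /
        (k - A / Real.cosh ((p1 / 2) * (a + c1 * b)) ^ 2)) * (p1 / 2) := by
    intro a b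
    have hfun : (fun a0 => Real.log (r a0 b)) =
        (fun x => Real.log (k - A / Real.cosh x ^ 2)) ∘ (fun a0 => (p1 / 2) * (a0 + c1 * b)) := by
      funext a0; simp [Function.comp, hre]
    have hin : HasDerivAt (fun a0 : ℝ => (p1 / 2) * (a0 + c1 * b)) (p1 / 2 * 1) a :=
      (((hasDerivAt_id a).add_const (c1 * b))).const_mul (p1 / 2)
    have hD := (d1 k A ((p1 / 2) * (a + c1 * b)) (hrne' a b)).comp a hin
    show deriv (fun a0 => Real.log (r a0 b)) a = _
    rw [hfun, hD.deriv]
    ring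
  -- Step B: mixed partial derivative
  set ξ : ℝ := (p1 / 2) * (y + c1 * τ) with hξ
  have stepB : pd2 (pd1 (fun a b => Real.log (r a b))) y τ =
      ((2 * A * (3 - 2 * Real.cosh ξ ^ 2) * (k * Real.cosh ξ ^ 2 - A)
          - 4 * A ^ 2 * (Real.cosh ξ ^ 2 - 1)) /
        (Real.cosh ξ ^ 2 * (k * Real.cosh ξ ^ 2 - A) ^ 2)) * (p1 / 2 * c1) * (p1 / 2) := by
    have hfun : (fun t0 => pd1 (fun a b => Real.log (r a b)) y t0) =
        (fun t0 => ((fun x => (2 * A * Real.sinh x / Real.cosh x ^ 3) /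
          (k - A / Real.cosh x ^ 2)) ∘ (fun t0 : ℝ => (p1 / 2) * (y + c1 * t0))) t0 * (p1 / 2)) := by
      funext t0; rw [stepA y t0]; rfl
    have hin : HasDerivAt (fun t0 : ℝ => (p1 / 2) * (y + c1 * t0)) (p1 / 2 * (c1 * 1)) τ :=
      (((hasDerivAt_id τ).const_mul c1).const_add y).const_mul (p1 / 2)
    have hD := ((d2 k A ξ (hrne' y τ)).comp τ hin).mul_const (p1 / 2)
    show deriv (fun t0 => pd1 (fun a b => Real.log (r a b)) y t0) τ = _
    rw [hfun, hD.deriv]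
    ring
  -- Step C: algebra
  have hcc : Real.cosh ξ ≠ 0 := (Real.cosh_pos ξ).ne'
  have hden : k * Real.cosh ξ ^ 2 - A ≠ 0 := by
    have h0 := hrne' y τ
    rw [← hξ] at h0
    intro hE
    apply h0
    rw [show k - A / Real.cosh ξ ^ 2 = (k * Real.cosh ξ ^ 2 - A) / Real.cosh ξ ^ 2 by
      field_simp, hE, zero_div]
  have h2r : 2 * k - c1 * p1 ^ 2 * (1 / Real.cosh ξ) ^ 2 ≠ 0 := by
    have : 2 * k - c1 * p1 ^ 2 * (1 / Real.cosh ξ) ^ 2 =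
        2 * (k * Real.cosh ξ ^ 2 - A) / Real.cosh ξ ^ 2 := by
      rw [hA]; field_simp
    rw [this]
    exact div_ne_zero (by simpa using hden) (pow_ne_zero 2 hcc)
  have hRHS : k * c1 * p1 ^ 2 * (c1 * p1 ^ 2 - 2 * k) * (1 / Real.cosh ξ) ^ 2 /
      (2 * k - c1 * p1 ^ 2 * (1 / Real.cosh ξ) ^ 2) =
      2 * k * A * (A - k) / (k * Real.cosh ξ ^ 2 - A) := by
    rw [div_eq_div_iff h2r hden, hA]
    field_simp
  rw [hu]
  simp only [stepB, hre y τ, ← hξ]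
  rw [hRHS]
  rw [show k - A / Real.cosh ξ ^ 2 = (k * Real.cosh ξ ^ 2 - A) / Real.cosh ξ ^ 2 by field_simp]
  field_simp
  ring
end

section
/- As y → +∞ (with τ fixed), the function φ₁ = W(f₁,…,f_N, e^{y/(2k)})/W(f₁,…,f_N) satisfies φ₁ ∼ ∏_{j=1}^N (1/(2k) - p_j/2) · e^{y/(2k)}, i.e. the ratio φ₁ / (e^{y/(2k)} ∏_j (1/(2k) - p_j/2)) tends to 1. -/
open Matrix Filter Finset

noncomputable def wron {N : ℕ} (g : Fin N → ℝ → ℝ) : ℝ → ℝ :=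
  fun y => Matrix.det (Matrix.of fun i j : Fin N => iteratedDeriv (i : ℕ) (g j) y)

lemma Ioi_castSucc' {n : ℕ} (i : Fin n) :
    Finset.Ioi (Fin.castSucc i) = insert (Fin.last n) ((Finset.Ioi i).map Fin.castSuccEmb) := by
  ext j
  simp only [Finset.mem_Ioi, Finset.mem_insert, Finset.mem_map]
  constructor
  · intro hj
    rcases Fin.eq_castSucc_or_eq_last j with ⟨j', rfl⟩ | h
    · exact Or.inr ⟨j', Fin.castSucc_lt_castSucc_iff.1 hj, rfl⟩
    · exact Or.inl h
  · rintro (rfl | ⟨j', hj', rfl⟩)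
    · exact Fin.castSucc_lt_last i
    · show Fin.castSucc i < Fin.castSucc j'
      exact Fin.castSucc_lt_castSucc_iff.2 hj'

lemma prod_Ioi_snoc {M : Type*} [CommMonoid M] (n : ℕ) (G : Fin (n+1) → Fin (n+1) → M) :
    (∏ i : Fin (n+1), ∏ j ∈ Finset.Ioi i, G i j)
      = (∏ i : Fin n, ∏ j ∈ Finset.Ioi i, G i.castSucc j.castSucc)
        * ∏ i : Fin n, G i.castSucc (Fin.last n) := by
  rw [Fin.prod_univ_castSucc]
  have hlast : Finset.Ioi (Fin.last n) = ∅ := by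
    ext j
    simp only [Finset.mem_Ioi, Finset.notMem_empty, iff_false, Fin.lt_iff_val_lt_val]
    exact Nat.not_lt.2 (Nat.lt_succ_iff.1 j.isLt)
  rw [hlast, Finset.prod_empty, mul_one, ← Finset.prod_mul_distrib]
  refine Finset.prod_congr rfl fun i _ => ?_
  rw [Ioi_castSucc' i, Finset.prod_insert
    (by simp only [Finset.mem_map]; rintro ⟨x, -, h⟩; exact (Fin.castSucc_lt_last x).ne h),
    Finset.prod_map]
  exact mul_comm _ _

lemma iteratedDeriv_comb (A a B b : ℝ) (n : ℕ) :
    iteratedDeriv n (fun y => A * Real.exp (a*y) + B * Real.exp (b*y))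
      = fun y => A * a^n * Real.exp (a*y) + B * b^n * Real.exp (b*y) := by
  induction n with
  | zero => funext y; simp
  | succ n ih =>
    rw [iteratedDeriv_succ, ih]
    funext y
    have h1 : HasDerivAt (fun y => A * a^n * Real.exp (a*y) + B * b^n * Real.exp (b*y))
        (A * a^n * (Real.exp (a*y) * (a*1)) + B * b^n * (Real.exp (b*y) * (b*1))) y := by
      exact HasDerivAt.add
        ((((hasDerivAt_id y).const_mul a).exp).const_mul (A*a^n))
        ((((hasDerivAt_id y).const_mul b).exp).const_mul (B*b^n))
    rw [h1.deriv]; ring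

lemma wron_eq (n : ℕ) (coef lam : Fin n → Bool → ℝ) (g : Fin n → ℝ → ℝ)
    (hg : ∀ j, g j = fun y => coef j true * Real.exp (lam j true * y)
        + coef j false * Real.exp (lam j false * y)) (y : ℝ) :
    wron g y = ∑ ε : Fin n → Bool,
      ((∏ j, coef j (ε j)) * ∏ i, ∏ j ∈ Finset.Ioi i, (lam j (ε j) - lam i (ε i)))
        * Real.exp ((∑ j, lam j (ε j)) * y) := by
  have hM : (Matrix.of fun i j : Fin n => iteratedDeriv (i : ℕ) (g j) y)
      = (Matrix.of fun j i : Fin n =>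
          ∑ b : Bool, (coef j b * Real.exp (lam j b * y)) • ((lam j b) ^ (i : ℕ)))ᵀ := by
    ext i j
    simp only [Matrix.transpose_apply, Matrix.of_apply, hg j, iteratedDeriv_comb,
      Fintype.sum_bool, smul_eq_mul]
    ring
  rw [wron, hM, Matrix.det_transpose]
  have : Matrix.det (Matrix.of fun j i : Fin n =>
      ∑ b : Bool, (coef j b * Real.exp (lam j b * y)) • ((lam j b) ^ (i : ℕ)))
      = (Matrix.detRowAlternating : (Fin n → ℝ) [⋀^Fin n]→ₗ[ℝ] ℝ).toMultilinearMap
          (fun j => ∑ b : Bool, (coef j b * Real.exp (lam j b * y)) • (fun i : Fin n => (lam j b) ^ (i : ℕ))) := by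
    rfl
  rw [this, MultilinearMap.map_sum]
  refine Finset.sum_congr rfl fun ε _ => ?_
  rw [MultilinearMap.map_smul_univ]
  have hvand : (Matrix.detRowAlternating : (Fin n → ℝ) [⋀^Fin n]→ₗ[ℝ] ℝ).toMultilinearMap
      (fun j => fun i : Fin n => (lam j (ε j)) ^ (i : ℕ))
      = ∏ i, ∏ j ∈ Finset.Ioi i, (lam j (ε j) - lam i (ε i)) := by
    rw [show ((fun j => fun i : Fin n => (lam j (ε j)) ^ (i : ℕ)) : Fin n → Fin n → ℝ)
        = Matrix.vandermonde (fun j => lam j (ε j)) from rfl]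
    exact Matrix.det_vandermonde _
  rw [hvand, smul_eq_mul, Finset.prod_mul_distrib, ← Real.exp_sum, ← Finset.sum_mul]
  ring

lemma sum_exp_tendsto {ι : Type*} [Fintype ι] [DecidableEq ι] (K m : ι → ℝ) (ε₀ : ι)
    (hK : K ε₀ ≠ 0) (hm : ∀ ε, ε ≠ ε₀ → m ε < m ε₀) :
    Tendsto (fun y => (∑ ε, K ε * Real.exp (m ε * y)) / (K ε₀ * Real.exp (m ε₀ * y)))
      atTop (nhds 1) := by
  have heq : (fun y => (∑ ε, K ε * Real.exp (m ε * y)) / (K ε₀ * Real.exp (m ε₀ * y)))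
      = fun y => ∑ ε, (K ε / K ε₀) * Real.exp ((m ε - m ε₀) * y) := by
    funext y
    rw [Finset.sum_div]
    refine Finset.sum_congr rfl fun ε _ => ?_
    rw [mul_div_mul_comm, ← Real.exp_sub, ← sub_mul]
  rw [heq]
  have h1 : (1 : ℝ) = ∑ ε, if ε = ε₀ then (1:ℝ) else 0 := by
    rw [Finset.sum_ite_eq' Finset.univ ε₀ (fun _ => (1:ℝ))]
    simp
  rw [h1]
  refine tendsto_finset_sum _ fun ε _ => ?_
  by_cases h : ε = ε₀
  · subst h
    simp only [if_pos rfl, sub_self, zero_mul, Real.exp_zero, mul_one, div_self hK]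
    exact tendsto_const_nhds
  · simp only [if_neg h]
    have hneg : m ε - m ε₀ < 0 := sub_neg.2 (hm ε h)
    have hexp : Tendsto (fun y => Real.exp ((m ε - m ε₀) * y)) atTop (nhds 0) := by
      apply Real.tendsto_exp_atBot.comp
      exact Tendsto.const_mul_atTop_of_neg hneg tendsto_id
    simpa using hexp.const_mul (K ε / K ε₀)

/-- asymptotics of φ₁ as y → +∞. -/
theorem stmt10 (N : ℕ) (k τ : ℝ) (hk : 0 < k) (p c : Fin N → ℝ)
    (hp : ∀ j, 0 < p j) (hmono : StrictMono p)
    (hkp : ∀ j, k * p j ≠ 1)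
    (hc : ∀ j, c j = 2 * k ^ 3 / (k ^ 2 * (p j) ^ 2 - 1))
    (f : Fin N → ℝ → ℝ)
    (hf : ∀ j, f j = fun y =>
      if (j : ℕ) % 2 = 0 then Real.cosh ((p j / 2) * (y + c j * τ))
      else Real.sinh ((p j / 2) * (y + c j * τ)))
    (P : ℝ) (hP : P = ∏ j, (1 / (2 * k) - p j / 2)) (hPne : P ≠ 0)
    (φ1 : ℝ → ℝ)
    (hφ1 : φ1 = fun y =>
      wron (Fin.snoc f (fun z => Real.exp (z / (2 * k)))) y / wron f y) :
    Filter.Tendsto (fun y => φ1 y / (Real.exp (y / (2 * k)) * P))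
      Filter.atTop (nhds 1) := by
  classical
  obtain ⟨a, ha⟩ : ∃ a : Fin N → ℝ, a = fun j => p j / 2 := ⟨_, rfl⟩
  have ha_pos : ∀ j, 0 < a j := fun j => by rw [ha]; exact half_pos (hp j)
  have ha_mono : ∀ i j : Fin N, i < j → a i < a j := fun i j hij => by
    rw [ha]; exact div_lt_div_of_pos_right (hmono hij) two_pos
  obtain ⟨coefD, hcoefD⟩ : ∃ coefD : Fin N → Bool → ℝ, coefD = fun j b =>
      if b then Real.exp (a j * (c j * τ)) / 2
      else (if (j : ℕ) % 2 = 0 then 1 else -1) * Real.exp (-(a j * (c j * τ))) / 2 := ⟨_, rfl⟩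
  obtain ⟨lamD, hlamD⟩ : ∃ lamD : Fin N → Bool → ℝ, lamD = fun j b =>
      if b then a j else -a j := ⟨_, rfl⟩
  have hlamD_t : ∀ j, lamD j true = a j := fun j => by simp [hlamD]
  have hlamD_f : ∀ j, lamD j false = -a j := fun j => by simp [hlamD]
  have hcoefD_t : ∀ j, coefD j true = Real.exp (a j * (c j * τ)) / 2 := fun j => by simp [hcoefD]
  have hfD : ∀ j, f j = fun y => coefD j true * Real.exp (lamD j true * y)
      + coefD j false * Real.exp (lamD j false * y) := by
    intro j
    rw [hf j]
    funext y
    rw [hcoefD, hlamD]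
    have harg : (p j / 2) * (y + c j * τ) = a j * (c j * τ) + a j * y := by rw [ha]; ring
    by_cases hj : (j : ℕ) % 2 = 0
    · rw [if_pos hj, harg, Real.cosh_eq, Real.exp_add,
        show -(a j * (c j * τ) + a j * y) = -(a j * (c j * τ)) + (-a j) * y by ring,
        Real.exp_add]
      simp only [if_pos hj]
      norm_num
      ring
    · rw [if_neg hj, harg, Real.sinh_eq, Real.exp_add,
        show -(a j * (c j * τ) + a j * y) = -(a j * (c j * τ)) + (-a j) * y by ring,
        Real.exp_add]
      simp only [if_neg hj]
      norm_num
      ring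
  obtain ⟨gN, hgN⟩ : ∃ gN : Fin (N+1) → ℝ → ℝ,
      gN = Fin.snoc f (fun z => Real.exp (z / (2 * k))) := ⟨_, rfl⟩
  obtain ⟨coefN, hcoefN⟩ : ∃ coefN : Fin (N+1) → Bool → ℝ,
      coefN = Fin.snoc coefD (fun b => if b then 1 else 0) := ⟨_, rfl⟩
  obtain ⟨lamN, hlamN⟩ : ∃ lamN : Fin (N+1) → Bool → ℝ,
      lamN = Fin.snoc lamD (fun b => if b then 1/(2*k) else 0) := ⟨_, rfl⟩
  have hcoefN_c : ∀ i : Fin N, ∀ b, coefN i.castSucc b = coefD i b := by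
    intro i b; rw [hcoefN, Fin.snoc_castSucc]
  have hlamN_c : ∀ i : Fin N, ∀ b, lamN i.castSucc b = lamD i b := by
    intro i b; rw [hlamN, Fin.snoc_castSucc]
  have hcoefN_l : ∀ b, coefN (Fin.last N) b = if b then 1 else 0 := by
    intro b; rw [hcoefN, Fin.snoc_last]
  have hlamN_l : ∀ b, lamN (Fin.last N) b = if b then 1/(2*k) else 0 := by
    intro b; rw [hlamN, Fin.snoc_last]
  have hfN : ∀ j, gN j = fun y => coefN j true * Real.exp (lamN j true * y)
      + coefN j false * Real.exp (lamN j false * y) := by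
    intro j
    refine Fin.lastCases ?_ ?_ j
    · rw [hgN, Fin.snoc_last]
      funext z
      rw [hcoefN_l, hcoefN_l, hlamN_l, hlamN_l]
      norm_num
      rw [eq_comm, mul_comm]
      congr 1
      field_simp
    · intro i
      rw [hgN, Fin.snoc_castSucc]
      funext y
      rw [hcoefN_c, hcoefN_c, hlamN_c, hlamN_c, hfD i]
  -- the coefficients and exponents
  obtain ⟨KD, hKD⟩ : ∃ KD : (Fin N → Bool) → ℝ, KD = fun ε =>
      (∏ j, coefD j (ε j)) * ∏ i, ∏ j ∈ Finset.Ioi i, (lamD j (ε j) - lamD i (ε i)) := ⟨_, rfl⟩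
  obtain ⟨mD, hmDdef⟩ : ∃ mD : (Fin N → Bool) → ℝ, mD = fun ε => ∑ j, lamD j (ε j) := ⟨_, rfl⟩
  obtain ⟨KN, hKN⟩ : ∃ KN : (Fin (N+1) → Bool) → ℝ, KN = fun ε =>
      (∏ j, coefN j (ε j)) * ∏ i, ∏ j ∈ Finset.Ioi i, (lamN j (ε j) - lamN i (ε i)) := ⟨_, rfl⟩
  obtain ⟨mN, hmNdef⟩ : ∃ mN : (Fin (N+1) → Bool) → ℝ, mN = fun ε => ∑ j, lamN j (ε j) := ⟨_, rfl⟩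
  have hWD : ∀ y, wron f y = ∑ ε : Fin N → Bool, KD ε * Real.exp (mD ε * y) := by
    intro y; rw [wron_eq N coefD lamD f hfD y, hKD, hmDdef]
  have hWN : ∀ y, wron gN y = ∑ ε : Fin (N+1) → Bool, KN ε * Real.exp (mN ε * y) := by
    intro y; rw [wron_eq (N+1) coefN lamN gN hfN y, hKN, hmNdef]
  -- dominant configurations
  have hVD_pos : 0 < ∏ i, ∏ j ∈ Finset.Ioi i, (lamD j true - lamD i true) := by
    refine Finset.prod_pos fun i _ => Finset.prod_pos fun j hj => ?_
    rw [hlamD_t, hlamD_t]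
    exact sub_pos.2 (ha_mono i j (Finset.mem_Ioi.1 hj))
  have hcoefD_pos : ∀ j, 0 < coefD j true := by
    intro j; rw [hcoefD_t]; positivity
  have hKD_pos : 0 < KD (fun _ => true) := by
    rw [hKD]
    exact mul_pos (Finset.prod_pos fun j _ => hcoefD_pos j) hVD_pos
  have hmD_max : ∀ ε : Fin N → Bool, ε ≠ (fun _ => true) → mD ε < mD (fun _ => true) := by
    intro ε hne
    obtain ⟨j0, hj0⟩ := Function.ne_iff.1 hne
    rw [hmDdef]
    refine Finset.sum_lt_sum (fun j _ => ?_) ⟨j0, Finset.mem_univ _, ?_⟩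
    · cases hb : ε j with
      | true => exact le_rfl
      | false => rw [hlamD_f, hlamD_t]; exact (neg_le_self (ha_pos j).le)
    · have hb : ε j0 = false := by
        cases h : ε j0 with
        | true => exact absurd h hj0
        | false => rfl
      rw [hb, hlamD_f, hlamD_t]
      exact neg_lt_self (ha_pos j0)
  have hlamN_lt : ∀ j : Fin (N+1), lamN j false < lamN j true := by
    intro j
    refine Fin.lastCases ?_ ?_ j
    · rw [hlamN_l, hlamN_l]; simp only [if_true, if_false]; positivity
    · intro i
      rw [hlamN_c, hlamN_c, hlamD_f, hlamD_t]
      exact neg_lt_self (ha_pos i)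
  have hmN_max : ∀ ε : Fin (N+1) → Bool, ε ≠ (fun _ => true) → mN ε < mN (fun _ => true) := by
    intro ε hne
    obtain ⟨j0, hj0⟩ := Function.ne_iff.1 hne
    rw [hmNdef]
    refine Finset.sum_lt_sum (fun j _ => ?_) ⟨j0, Finset.mem_univ _, ?_⟩
    · cases hb : ε j with
      | true => exact le_rfl
      | false => exact (hlamN_lt j).le
    · have hb : ε j0 = false := by
        cases h : ε j0 with
        | true => exact absurd h hj0
        | false => rfl
      rw [hb]
      exact hlamN_lt j0
  -- key values
  have hKN_val : KN (fun _ => true) = KD (fun _ => true) * P := by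
    rw [hKN, hKD]
    simp only []
    have h1 : (∏ j : Fin (N+1), coefN j true) = ∏ j : Fin N, coefD j true := by
      rw [Fin.prod_univ_castSucc]
      rw [hcoefN_l]
      simp only [if_true, mul_one]
      exact Finset.prod_congr rfl fun i _ => hcoefN_c i true
    have h2 : (∏ i : Fin (N+1), ∏ j ∈ Finset.Ioi i, (lamN j true - lamN i true))
        = (∏ i : Fin N, ∏ j ∈ Finset.Ioi i, (lamD j true - lamD i true)) * P := by
      rw [prod_Ioi_snoc N (fun i j => lamN j true - lamN i true)]
      congr 1
      · exact Finset.prod_congr rfl fun i _ => Finset.prod_congr rfl fun j _ => by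
          rw [hlamN_c, hlamN_c]
      · rw [hP]
        refine Finset.prod_congr rfl fun i _ => ?_
        rw [hlamN_l, hlamN_c, hlamD_t, ha]
        simp only [if_true]
    rw [h1, h2]
    ring
  have hmN_val : mN (fun _ => true) = mD (fun _ => true) + 1/(2*k) := by
    rw [hmNdef, hmDdef]
    simp only []
    rw [Fin.sum_univ_castSucc, hlamN_l,
      Finset.sum_congr rfl fun i (_ : i ∈ Finset.univ) => hlamN_c i true]
    norm_num

  have hKN_ne : KN (fun _ => true) ≠ 0 := by
    rw [hKN_val]; exact mul_ne_zero hKD_pos.ne' hPne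
  -- the two normalized limits
  have hFN : Tendsto (fun y => wron gN y / (KN (fun _ => true) * Real.exp (mN (fun _ => true) * y)))
      atTop (nhds 1) :=
    (sum_exp_tendsto KN mN (fun _ => true) hKN_ne hmN_max).congr (fun y => by rw [← hWN y])
  have hFD : Tendsto (fun y => wron f y / (KD (fun _ => true) * Real.exp (mD (fun _ => true) * y)))
      atTop (nhds 1) :=
    (sum_exp_tendsto KD mD (fun _ => true) hKD_pos.ne' hmD_max).congr (fun y => by rw [← hWD y])
  have hmain : Tendsto (fun y =>
      (wron gN y / (KN (fun _ => true) * Real.exp (mN (fun _ => true) * y)))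
      * (wron f y / (KD (fun _ => true) * Real.exp (mD (fun _ => true) * y)))⁻¹)
      atTop (nhds 1) := by
    have := hFN.mul (hFD.inv₀ one_ne_zero)
    simpa using this
  refine hmain.congr fun y => ?_
  -- pointwise identity
  rw [hφ1, ← hgN]
  rw [hKN_val, hmN_val]
  have hexp : Real.exp ((mD (fun _ => true) + 1/(2*k)) * y)
      = Real.exp (mD (fun _ => true) * y) * Real.exp (y / (2*k)) := by
    rw [← Real.exp_add]
    congr 1
    field_simp
  rw [hexp]
  by_cases hWD0 : wron f y = 0
  · simp [hWD0]
  · have hED : Real.exp (mD (fun _ => true) * y) ≠ 0 := Real.exp_ne_zero _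
    have hE : Real.exp (y / (2*k)) ≠ 0 := Real.exp_ne_zero _
    field_simp
end

section
/- Let (ψ, φ) solve the MCH spatial Lax system ψ_x = -ψ/2 + (λ m/2)φ, φ_x = -(λ m/2)ψ + φ/2, and pass to the reciprocal variable y with ∂_x = m∂_y. Then φ satisfies the Schrödinger equation φ_yy = -(λ²/4)φ + Uφ with potential U = 1/(4m²) - m_y/(2m²). -/
/-- eliminating ψ from the reciprocal MCH spatial Lax pair yields a
Schrödinger equation for φ with potential U = 1/(4m²) - m_y/(2m²). -/
theorem stmt12 (lam : ℝ) (m ψ φ : ℝ → ℝ) (hm : ContDiff ℝ (⊤ : ℕ∞) m)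
    (hmpos : ∀ y, 0 < m y) (hψ : ContDiff ℝ (⊤ : ℕ∞) ψ) (hφ : ContDiff ℝ (⊤ : ℕ∞) φ)
    (h1 : ∀ y, m y * deriv ψ y = -(ψ y) / 2 + (lam * m y / 2) * φ y)
    (h2 : ∀ y, m y * deriv φ y = -(lam * m y / 2) * ψ y + φ y / 2) :
    ∀ y, deriv (deriv φ) y =
      -(lam ^ 2 / 4) * φ y
        + (1 / (4 * (m y) ^ 2) - deriv m y / (2 * (m y) ^ 2)) * φ y := by
  have hmne : ∀ y, m y ≠ 0 := fun y => (hmpos y).ne'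
  have hdψ : ∀ y, HasDerivAt ψ (deriv ψ y) y :=
    fun y => (hψ.differentiable (by simp) y).hasDerivAt
  have hdφ : ∀ y, HasDerivAt φ (deriv φ y) y :=
    fun y => (hφ.differentiable (by simp) y).hasDerivAt
  have hdm : ∀ y, HasDerivAt m (deriv m y) y :=
    fun y => (hm.differentiable (by simp) y).hasDerivAt
  have hφ' : ∀ y, deriv φ y = -(lam / 2) * ψ y + φ y / (2 * m y) := by
    intro y
    have := h2 y
    field_simp [hmne y]
    linarith [this]
  have hψ' : ∀ y, deriv ψ y = -(ψ y) / (2 * m y) + lam / 2 * φ y := by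
    intro y
    have := h1 y
    field_simp [hmne y]
    linarith [this]
  have hfun : deriv φ = fun y => -(lam / 2) * ψ y + φ y / (2 * m y) := funext hφ'
  intro y
  have h2mne : (2 : ℝ) * m y ≠ 0 := mul_ne_zero two_ne_zero (hmne y)
  have hg : HasDerivAt (fun y => -(lam / 2) * ψ y + φ y / (2 * m y))
      (-(lam / 2) * deriv ψ y +
        (deriv φ y * (2 * m y) - φ y * (2 * deriv m y)) / (2 * m y) ^ 2) y :=
    ((hdψ y).const_mul _).add ((hdφ y).div ((hdm y).const_mul 2) h2mne)
  rw [hfun, hg.deriv, hψ' y, hφ' y]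
  field_simp [hmne y]
  ring
end

section
/- For k ≠ 0, p₁ > 0 with k²p₁² ≠ 1, c₁ = 2k³/(k²p₁² - 1), ξ₁ = (p₁/2)(y + c₁τ), the functions U = 1/(4k²) - (p₁²/2)sech²ξ₁ and V = -2k + c₁p₁² sech²ξ₁ satisfy U_τ = -(1/2)V_y and V_yyy - 2V U_y - 4 V_y U = 0. -/
noncomputable def F0 : ℝ → ℝ := fun x => (1 / Real.cosh x) ^ 2
noncomputable def F1 : ℝ → ℝ := fun x => -2 * Real.sinh x / Real.cosh x ^ 3
noncomputable def F2 : ℝ → ℝ := fun x =>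
  (6 * Real.sinh x ^ 2 - 2 * Real.cosh x ^ 2) / Real.cosh x ^ 4
noncomputable def F3 : ℝ → ℝ := fun x =>
  (16 * Real.sinh x * Real.cosh x ^ 2 - 24 * Real.sinh x ^ 3) / Real.cosh x ^ 5

lemma hF0 (x : ℝ) : HasDerivAt F0 (F1 x) x := by
  have h := ((hasDerivAt_const x (1:ℝ)).div (Real.hasDerivAt_cosh x) (coshne x)).pow 2
  refine h.congr_deriv ?_; symm
  simp only [F1]
  push_cast
  field_simp
  simp only [Pi.div_apply]
  field_simp
  ring

lemma hF1 (x : ℝ) : HasDerivAt F1 (F2 x) x := by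
  have hn : HasDerivAt (fun x => -2 * Real.sinh x) (-2 * Real.cosh x) x :=
    (Real.hasDerivAt_sinh x).const_mul (-2)
  have hd : HasDerivAt (fun x => Real.cosh x ^ 3) (3 * Real.cosh x ^ 2 * Real.sinh x) x :=
    (Real.hasDerivAt_cosh x).pow 3
  have h := hn.div hd (pow_ne_zero 3 (coshne x))
  refine h.congr_deriv ?_; symm
  simp only [F2]
  rw [div_eq_div_iff (by positivity) (by positivity)]
  ring

lemma hF2 (x : ℝ) : HasDerivAt F2 (F3 x) x := by
  have hn : HasDerivAt (fun x => 6 * Real.sinh x ^ 2 - 2 * Real.cosh x ^ 2)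
      (6 * (2 * Real.sinh x * Real.cosh x) - 2 * (2 * Real.cosh x * Real.sinh x)) x := by
    have h1 := ((Real.hasDerivAt_sinh x).pow 2).const_mul 6
    have h2 := ((Real.hasDerivAt_cosh x).pow 2).const_mul 2
    refine (h1.sub h2).congr_deriv ?_; ring
  have hd : HasDerivAt (fun x => Real.cosh x ^ 4) (4 * Real.cosh x ^ 3 * Real.sinh x) x :=
    (Real.hasDerivAt_cosh x).pow 4
  have h := hn.div hd (pow_ne_zero 4 (coshne x))
  refine h.congr_deriv ?_; symm
  simp only [F3]
  rw [div_eq_div_iff (by positivity) (by positivity)]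
  ring

lemma pd1_form (F F' : ℝ → ℝ) (hF : ∀ x, HasDerivAt F (F' x) x) (a e b d : ℝ) :
    pd1 (fun y τ => d + b * F (a * (y + e * τ))) =
      fun y τ => b * a * F' (a * (y + e * τ)) := by
  funext y τ
  have hlin : HasDerivAt (fun y : ℝ => a * (y + e * τ)) a y := by
    simpa using ((hasDerivAt_id y).add_const (e * τ)).const_mul a
  have h := (((hF (a * (y + e * τ))).comp y hlin).const_mul b).const_add d
  have h' : HasDerivAt (fun y : ℝ => d + b * F (a * (y + e * τ)))
      (b * (F' (a * (y + e * τ)) * a)) y := h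
  show deriv _ y = _
  rw [h'.deriv]; ring

lemma pd2_form (F F' : ℝ → ℝ) (hF : ∀ x, HasDerivAt F (F' x) x) (a e b d : ℝ) :
    pd2 (fun y τ => d + b * F (a * (y + e * τ))) =
      fun y τ => b * (a * e) * F' (a * (y + e * τ)) := by
  funext y τ
  have hlin : HasDerivAt (fun τ : ℝ => a * (y + e * τ)) (a * e) τ := by
    simpa using (((hasDerivAt_id τ).const_mul e).const_add y).const_mul a
  have h := (((hF (a * (y + e * τ))).comp τ hlin).const_mul b).const_add d
  have h' : HasDerivAt (fun τ : ℝ => d + b * F (a * (y + e * τ)))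
      (b * (F' (a * (y + e * τ)) * (a * e))) τ := h
  show deriv _ τ = _
  rw [h'.deriv]; ring

/-- the one-soliton pair (U, V) satisfies the negative-order KdV system
associated with the modified CH equation. -/
theorem stmt15 (k p1 c1 : ℝ) (hk : k ≠ 0) (hp : 0 < p1) (hkp : k ^ 2 * p1 ^ 2 ≠ 1)
    (hc : c1 = 2 * k ^ 3 / (k ^ 2 * p1 ^ 2 - 1))
    (U V : ℝ → ℝ → ℝ)
    (hU : U = fun y τ =>
      1 / (4 * k ^ 2) - (p1 ^ 2 / 2) * (1 / Real.cosh ((p1 / 2) * (y + c1 * τ))) ^ 2)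
    (hV : V = fun y τ =>
      -2 * k + c1 * p1 ^ 2 * (1 / Real.cosh ((p1 / 2) * (y + c1 * τ))) ^ 2) :
    (∀ y τ, pd2 U y τ = -(1 / 2) * pd1 V y τ) ∧
    (∀ y τ, pd1 (pd1 (pd1 V)) y τ - 2 * V y τ * pd1 U y τ - 4 * pd1 V y τ * U y τ = 0) := by
  have hU' : U = fun y τ => 1 / (4 * k ^ 2) +
      (-(p1 ^ 2 / 2)) * F0 ((p1 / 2) * (y + c1 * τ)) := by
    rw [hU]; funext y τ; simp only [F0]; ring
  have hV' : V = fun y τ => (-2 * k) + (c1 * p1 ^ 2) * F0 ((p1 / 2) * (y + c1 * τ)) := by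
    rw [hV]; funext y τ; simp only [F0]
  have hU1 : pd1 U = fun y τ => (-(p1 ^ 2 / 2)) * (p1 / 2) * F1 ((p1 / 2) * (y + c1 * τ)) := by
    rw [hU']; exact pd1_form F0 F1 hF0 (p1 / 2) c1 _ _
  have hU2 : pd2 U = fun y τ =>
      (-(p1 ^ 2 / 2)) * ((p1 / 2) * c1) * F1 ((p1 / 2) * (y + c1 * τ)) := by
    rw [hU']; exact pd2_form F0 F1 hF0 (p1 / 2) c1 _ _
  have hV1 : pd1 V = fun y τ =>
      0 + (c1 * p1 ^ 2 * (p1 / 2)) * F1 ((p1 / 2) * (y + c1 * τ)) := by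
    rw [hV', pd1_form F0 F1 hF0]; funext y τ; ring
  have hV2 : pd1 (pd1 V) = fun y τ =>
      0 + (c1 * p1 ^ 2 * (p1 / 2) * (p1 / 2)) * F2 ((p1 / 2) * (y + c1 * τ)) := by
    rw [hV1, pd1_form F1 F2 hF1]; funext y τ; ring
  have hV3 : pd1 (pd1 (pd1 V)) = fun y τ =>
      (c1 * p1 ^ 2 * (p1 / 2) * (p1 / 2)) * (p1 / 2) * F3 ((p1 / 2) * (y + c1 * τ)) := by
    rw [hV2]; exact pd1_form F2 F3 hF2 (p1 / 2) c1 _ _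
  have hden : k ^ 2 * p1 ^ 2 - 1 ≠ 0 := sub_ne_zero.mpr hkp
  have key : c1 * (k ^ 2 * p1 ^ 2 - 1) = 2 * k ^ 3 := by
    rw [hc]; field_simp
  constructor
  · intro y τ
    rw [hU2, hV1]
    ring
  · intro y τ
    rw [hV3, hV1, hU1, hU', hV']
    simp only [F0, F1, F2, F3]
    set S := Real.sinh ((p1 / 2) * (y + c1 * τ)) with hS
    set C := Real.cosh ((p1 / 2) * (y + c1 * τ)) with hC
    have hCne : C ≠ 0 := (Real.cosh_pos _).ne'
    have hC2 : C ^ 2 = S ^ 2 + 1 := Real.cosh_sq _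
    field_simp
    apply mul_left_cancel₀ hden
    linear_combination
      (k ^ 2 * p1 ^ 2 - 1) * (-8 * p1 ^ 3 * S * C ^ 2) * key +
      (k ^ 2 * p1 ^ 2 - 1) * (24 * k ^ 2 * c1 * p1 ^ 5 * S) * hC2
end
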